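/- Let u, f, ψ be smooth real functions on ℝ² with ψ_y = ψ_{xx} + u·ψ, f_y = f_{xx} + u·f, and f nowhere vanishing. Then φ := ψ/f satisfies φ_y = φ_{xx} + 2ṽ·φ_x, where ṽ := f_x/f. (The Miura-type map M_1[f] sends eigenfunctions of the KP-type Lax equation to eigenfunctions of the mKP-type Lax equation; a claim established in the proof of Theorem 7.1.) -/

import Mathlib

noncomputable section

abbrev Pt2 : Type := ℝ × ℝ

/-- partial derivative in the first coordinate `x`. -/
def px (F : Pt2 → ℝ) : Pt2 → ℝ := fun p => deriv (fun s => F (s, p.2)) p.1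

/-- partial derivative in the second coordinate `y`. -/
def py (F : Pt2 → ℝ) : Pt2 → ℝ := fun p => deriv (fun s => F (p.1, s)) p.2

lemma sliceX_diff {F : Pt2 → ℝ} (hF : ContDiff ℝ (⊤ : ℕ∞) F) (b a : ℝ) :
    DifferentiableAt ℝ (fun s => F (s, b)) a :=
  (((hF.differentiable (by simp)).comp
    (differentiable_id.prodMk (differentiable_const b))) a)

lemma sliceY_diff {F : Pt2 → ℝ} (hF : ContDiff ℝ (⊤ : ℕ∞) F) (a b : ℝ) :
    DifferentiableAt ℝ (fun s => F (a, s)) b :=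
  (((hF.differentiable (by simp)).comp
    ((differentiable_const a).prodMk differentiable_id)) b)

lemma px_eq_fderiv {F : Pt2 → ℝ} (hF : ContDiff ℝ (⊤ : ℕ∞) F) (p : Pt2) :
    px F p = fderiv ℝ F p (1, 0) := by
  have hc : HasDerivAt (fun s : ℝ => (s, p.2)) ((1 : ℝ), (0 : ℝ)) p.1 :=
    (hasDerivAt_id p.1).prodMk (hasDerivAt_const p.1 p.2)
  have hF' : HasFDerivAt F (fderiv ℝ F p) p :=
    (hF.differentiable (by simp) p).hasFDerivAt
  have : HasDerivAt (fun s => F (s, p.2)) (fderiv ℝ F p (1, 0)) p.1 := by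
    exact hF'.comp_hasDerivAt p.1 hc
  exact this.deriv

lemma contDiff_px {F : Pt2 → ℝ} (hF : ContDiff ℝ (⊤ : ℕ∞) F) : ContDiff ℝ (⊤ : ℕ∞) (px F) := by
  have : px F = fun p => fderiv ℝ F p (1, 0) := funext (px_eq_fderiv hF)
  rw [this]
  exact (hF.fderiv_right (by simp)).clm_apply contDiff_const

lemma px_mul {F G : Pt2 → ℝ} (hF : ContDiff ℝ (⊤ : ℕ∞) F) (hG : ContDiff ℝ (⊤ : ℕ∞) G) (p : Pt2) :
    px (fun q => F q * G q) p = px F p * G p + F p * px G p :=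
  deriv_mul (sliceX_diff hF p.2 p.1) (sliceX_diff hG p.2 p.1)

lemma px_sub {F G : Pt2 → ℝ} (hF : ContDiff ℝ (⊤ : ℕ∞) F) (hG : ContDiff ℝ (⊤ : ℕ∞) G) (p : Pt2) :
    px (fun q => F q - G q) p = px F p - px G p :=
  deriv_sub (sliceX_diff hF p.2 p.1) (sliceX_diff hG p.2 p.1)

lemma px_div {F G : Pt2 → ℝ} (hF : ContDiff ℝ (⊤ : ℕ∞) F) (hG : ContDiff ℝ (⊤ : ℕ∞) G)
    (p : Pt2) (h0 : G p ≠ 0) :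
    px (fun q => F q / G q) p = (px F p * G p - F p * px G p) / (G p) ^ 2 :=
  deriv_div (sliceX_diff hF p.2 p.1) (sliceX_diff hG p.2 p.1) h0

lemma py_div {F G : Pt2 → ℝ} (hF : ContDiff ℝ (⊤ : ℕ∞) F) (hG : ContDiff ℝ (⊤ : ℕ∞) G)
    (p : Pt2) (h0 : G p ≠ 0) :
    py (fun q => F q / G q) p = (py F p * G p - F p * py G p) / (G p) ^ 2 :=
  deriv_div (sliceY_diff hF p.1 p.2) (sliceY_diff hG p.1 p.2) h0

theorem kp_to_mkp_eigenfunction_M1 (u f ψ : Pt2 → ℝ)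
    (hu : ContDiff ℝ (⊤ : ℕ∞) u) (hf : ContDiff ℝ (⊤ : ℕ∞) f) (hψ : ContDiff ℝ (⊤ : ℕ∞) ψ)
    (hψeq : ∀ p : Pt2, py ψ p = px (px ψ) p + u p * ψ p)
    (hfeq : ∀ p : Pt2, py f p = px (px f) p + u p * f p)
    (hf0 : ∀ p : Pt2, f p ≠ 0) :
    ∀ p : Pt2,
      py (fun p' => ψ p' / f p') p
        = px (px (fun p' => ψ p' / f p')) p
          + 2 * (px f p / f p) * px (fun p' => ψ p' / f p') p := by
  intro p
  have hpψ := contDiff_px hψ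
  have hpf := contDiff_px hf
  have hnum : ContDiff ℝ (⊤ : ℕ∞) (fun q => px ψ q * f q - ψ q * px f q) :=
    (hpψ.mul hf).sub (hψ.mul hpf)
  have hden : ContDiff ℝ (⊤ : ℕ∞) (fun q => f q ^ 2) := hf.pow 2
  have hden0 : ∀ q : Pt2, f q ^ 2 ≠ 0 := fun q => pow_ne_zero 2 (hf0 q)
  -- first x-derivative of φ
  have hphix : ∀ q : Pt2, px (fun p' => ψ p' / f p') q
      = (px ψ q * f q - ψ q * px f q) / (f q) ^ 2 :=
    fun q => px_div hψ hf q (hf0 q)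
  -- px of f^2
  have hden' : ∀ q : Pt2, px (fun q' => f q' ^ 2) q = 2 * f q * px f q := by
    intro q
    have h1 : (fun q' : Pt2 => f q' ^ 2) = fun q' => f q' * f q' := by
      funext q'; ring
    rw [h1, px_mul hf hf q]; ring
  -- px of numerator
  have hnum' : ∀ q : Pt2, px (fun q' => px ψ q' * f q' - ψ q' * px f q') q
      = (px (px ψ) q * f q + px ψ q * px f q)
        - (px ψ q * px f q + ψ q * px (px f) q) := by
    intro q
    rw [px_sub (hpψ.mul hf) (hψ.mul hpf) q, px_mul hpψ hf q, px_mul hψ hpf q]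
  -- second x-derivative
  have hphixx : px (px (fun p' => ψ p' / f p')) p
      = (px (fun q' => px ψ q' * f q' - ψ q' * px f q') p * f p ^ 2
          - (px ψ p * f p - ψ p * px f p) * px (fun q' => f q' ^ 2) p) / (f p ^ 2) ^ 2 := by
    have h1 : px (fun p' => ψ p' / f p')
        = fun q => (px ψ q * f q - ψ q * px f q) / (f q ^ 2) := funext hphix
    rw [h1]
    exact px_div hnum hden p (hden0 p)
  -- y-derivative
  have hphiy : py (fun p' => ψ p' / f p') p
      = (py ψ p * f p - ψ p * py f p) / (f p) ^ 2 := py_div hψ hf p (hf0 p)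
  rw [hphiy, hphixx, hphix p, hnum' p, hden' p, hψeq p, hfeq p]
  field_simp [hf0 p]
  ring
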